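/- arXiv:1403.7851 — 5 statements merged into one kernel-verified Lean document; each statement's English description precedes it below -/
import Mathlib

section
/- Let H be an m × N matrix with entries in {0,1} and for each row j let N(j) denote its support. If a 0-1 vector x ∈ {0,1}^N lies in the fundamental polytope Q(H), then x is a codeword of H, i.e., ∑_{i∈N(j)} x_i is even for every row j. In other words, the integral points of Q(H) are exactly the codewords of H (the ML-certificate property of the fundamental polytope). -/
/-- The support `N(j)` of row `j` of a 0-1 parity-check matrix. -/
def rowSupport {m N : ℕ} (H : Matrix (Fin m) (Fin N) Bool) (j : Fin m) : Finset (Fin N) :=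
  Finset.univ.filter (fun i => H j i = true)

/-- The fundamental polytope `Q(H)`: all `x ∈ [0,1]^N` such that for every row `j`
and every odd-size subset `V ⊆ N(j)`,
`∑_{i∈V} x_i − ∑_{i∈N(j)∖V} x_i ≤ |V| − 1`. -/
def fundamentalPolytope {m N : ℕ} (H : Matrix (Fin m) (Fin N) Bool) : Set (Fin N → ℝ) :=
  {x | (∀ i, 0 ≤ x i ∧ x i ≤ 1) ∧
    ∀ j : Fin m, ∀ V ⊆ rowSupport H j, Odd V.card →
      (∑ i ∈ V, x i) - (∑ i ∈ rowSupport H j \ V, x i) ≤ (V.card : ℝ) - 1}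

/-- `c ∈ {0,1}^N` is a codeword of `H`: every row's support contains an even
number of ones of `c`, i.e. `∑_{i∈N(j)} c_i` is even. -/
def isCodeword {m N : ℕ} (H : Matrix (Fin m) (Fin N) Bool) (c : Fin N → Bool) : Prop :=
  ∀ j : Fin m, Even ((rowSupport H j).filter (fun i => c i = true)).card

/-- The real embedding of a binary vector. -/
def toReal {N : ℕ} (c : Fin N → Bool) : Fin N → ℝ := fun i => if c i then 1 else 0

/-! If some row `j` had an odd number of ones of `c` in its support, take `V` to be exactly
those ones: then `∑_V c − ∑_{N(j)∖V} c = |V|`, violating the odd-set inequality for `V`. -/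

open Finset

section

variable {N : ℕ} (c : Fin N → Bool)

theorem sum_toReal_eq_card_filter (s : Finset (Fin N)) :
    ∑ i ∈ s, toReal c i = #(s.filter (fun i => c i = true)) :=
  sum_boole _ _

theorem sum_toReal_filter (s : Finset (Fin N)) :
    ∑ i ∈ s.filter (fun i => c i = true), toReal c i = #(s.filter (fun i => c i = true)) := by
  rw [sum_toReal_eq_card_filter, filter_filter]
  simp only [and_self]

theorem sum_toReal_sdiff_filter (s : Finset (Fin N)) :
    ∑ i ∈ s \ s.filter (fun i => c i = true), toReal c i = 0 := by
  rw [sum_toReal_eq_card_filter, Nat.cast_eq_zero, card_eq_zero, filter_eq_empty_iff]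
  intro i hi
  simp only [mem_sdiff, mem_filter, not_and] at hi
  exact hi.2 hi.1

end

/-- Any 0-1 vector lying in the fundamental polytope `Q(H)` is a
codeword of `H`: the integral points of `Q(H)` are exactly the codewords
(ML-certificate property). -/
theorem integral_point_of_fundamentalPolytope_isCodeword {m N : ℕ}
    (H : Matrix (Fin m) (Fin N) Bool) (c : Fin N → Bool)
    (hc : toReal c ∈ fundamentalPolytope H) : isCodeword H c := by
  intro j
  by_contra hEven
  set V := (rowSupport H j).filter (fun i => c i = true)
  have hV := hc.2 j V (filter_subset _ _) (Nat.not_even_iff_odd.mp hEven)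
  rw [sum_toReal_filter, sum_toReal_sdiff_filter] at hV
  linarith
end

section
/- For every integer d ≥ 1, the set of vectors x ∈ [0,1]^d satisfying, for every subset V ⊆ {1,…,d} of odd cardinality, the inequality ∑_{i∈V} x_i − ∑_{i∉V} x_i ≤ |V| − 1, is equal to the parity polytope of degree d, i.e., the convex hull in ℝ^d of the vectors in {0,1}^d having an even number of ones. (The fundamental polytope of a single parity check is exactly the convex hull of the binary vectors satisfying that check.) -/
/-- The parity polytope of degree `d`: the convex hull in `ℝ^d` of the binary
vectors with an even number of ones. -/
def parityPolytope (d : ℕ) : Set (Fin d → ℝ) :=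
  convexHull ℝ {x : Fin d → ℝ | ∃ c : Fin d → Bool,
    Even (Finset.univ.filter (fun i => c i = true)).card ∧
    x = fun i => if c i then 1 else 0}

/-!
On the box `[0,1]^ι`, the Feldman constraint of an odd set `V` says that the `ℓ¹`-distance from
`x` to the odd vertex `𝟙_V` is at least `1`; an even vertex `𝟙_S` satisfies it because that
distance is `#(S ∆ V)`, an odd number. By Krein–Milman it remains to show that extreme points are
integral. If `x` has a fractional coordinate `i` and no odd constraint is tight, `x` moves freely
along `eᵢ`. Otherwise a tight `V₀` forces a second fractional coordinate `j`, and for distinct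
tight odd sets `V`, `W` the bound `#(V ∆ W) ≤ dist(x, 𝟙_V) + dist(x, 𝟙_W) = 2`, strict unless
every fractional coordinate lies in `V ∆ W`, shows that all tight sets split `{i, j}` the same
way. A combination of `eᵢ` and `eⱼ` then keeps every tight constraint tight, so `x` is not extreme.
-/

open Finset Filter Topology
open scoped symmDiff

namespace Finset

variable {α : Type*} [DecidableEq α]

theorem card_symmDiff_add_two_mul_card_inter (s t : Finset α) :
    #(s ∆ t) + 2 * #(s ∩ t) = #s + #t := by
  rw [symmDiff_eq_sup_sdiff_inf, sup_eq_union, inf_eq_inter,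
    card_sdiff_of_subset inter_subset_union, ← card_union_add_card_inter]
  have := card_le_card (inter_subset_union (s := s) (t := t))
  omega

theorem even_card_symmDiff_iff (s t : Finset α) : Even #(s ∆ t) ↔ (Even #s ↔ Even #t) := by
  rw [← Nat.even_add, ← card_symmDiff_add_two_mul_card_inter, Nat.even_add]
  simp

end Finset

theorem eventually_add_mul_le {a b c : ℝ} (h : a ≤ c) (hb : a = c → b = 0) :
    ∀ᶠ t in 𝓝 (0 : ℝ), a + t * b ≤ c := by
  rcases h.lt_or_eq with h | h
  · have hcont : Tendsto (fun t : ℝ => a + t * b) (𝓝 0) (𝓝 a) :=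
      (by fun_prop : Continuous fun t : ℝ => a + t * b).tendsto' 0 a (by simp)
    exact (hcont.eventually (gt_mem_nhds h)).mono fun _ => le_of_lt
  · exact Eventually.of_forall fun t => by simp [hb h, h]

theorem eq_zero_of_mem_extremePoints_of_eventually_add_smul_mem {E : Type*} [AddCommGroup E]
    [Module ℝ E] {A : Set E} {x v : E} (hx : x ∈ A.extremePoints ℝ)
    (hv : ∀ᶠ t in 𝓝 (0 : ℝ), x + t • v ∈ A) : v = 0 := by
  have hneg : ∀ᶠ t in 𝓝 (0 : ℝ), x + (-t) • v ∈ A :=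
    (continuous_neg.tendsto' 0 0 neg_zero).eventually hv
  obtain ⟨t, ⟨hplus, hminus⟩, ht⟩ := (((hv.and hneg).filter_mono nhdsWithin_le_nhds).and
    (self_mem_nhdsWithin (s := Set.Ioi 0))).exists
  have hseg : x ∈ openSegment ℝ (x + (-t) • v) (x + t • v) :=
    ⟨1 / 2, 1 / 2, by norm_num, by norm_num, by norm_num, by module⟩
  have hfix : x + (-t) • v = x := hx.2 hminus hplus hseg
  simpa [ne_of_gt ht] using hfix

namespace ParityCheck

variable {ι : Type*} [DecidableEq ι]

def indicatorVec (S : Finset ι) : ι → ℝ := fun i => if i ∈ S then 1 else 0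

theorem abs_sub_indicatorVec_mem_Ioo {x : ι → ℝ} {i : ι} (hi : x i ∈ Set.Ioo 0 1)
    (S : Finset ι) : |x i - indicatorVec S i| ∈ Set.Ioo 0 1 := by
  obtain ⟨h0, h1⟩ := hi
  unfold indicatorVec
  split_ifs
  · rw [abs_sub_comm, abs_of_pos (by linarith)]; constructor <;> linarith
  · rw [sub_zero, abs_of_pos h0]; exact ⟨h0, h1⟩

variable [Fintype ι]

variable (ι) in
def feldmanPolytope : Set (ι → ℝ) :=
  {x | (∀ i, 0 ≤ x i ∧ x i ≤ 1) ∧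
    ∀ V : Finset ι, Odd #V → (∑ i ∈ V, x i) - (∑ i ∈ Vᶜ, x i) ≤ (#V : ℝ) - 1}

def parityCut (V : Finset ι) : (ι → ℝ) →ₗ[ℝ] ℝ :=
  ∑ i ∈ V, LinearMap.proj i - ∑ i ∈ Vᶜ, LinearMap.proj i

@[simp]
theorem parityCut_apply (V : Finset ι) (x : ι → ℝ) :
    parityCut V x = (∑ i ∈ V, x i) - ∑ i ∈ Vᶜ, x i := by
  simp [parityCut]

def vertexDist (x : ι → ℝ) (V : Finset ι) : ℝ := ∑ i, |x i - indicatorVec V i|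

theorem vertexDist_indicatorVec (S V : Finset ι) :
    vertexDist (indicatorVec S) V = #(S ∆ V) := by
  have hterm : ∀ i, |indicatorVec S i - indicatorVec V i| = if i ∈ S ∆ V then 1 else 0 := by
    intro i
    by_cases hS : i ∈ S <;> by_cases hV : i ∈ V <;> simp [indicatorVec, mem_symmDiff, hS, hV]
  simp [vertexDist, hterm]

theorem vertexDist_eq_card_sub_parityCut {x : ι → ℝ} (hx : ∀ i, 0 ≤ x i ∧ x i ≤ 1)
    (V : Finset ι) : vertexDist x V = #V - parityCut V x := by
  have hV : ∀ i ∈ V, |x i - indicatorVec V i| = 1 - x i := fun i hi => by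
    rw [indicatorVec, if_pos hi, abs_sub_comm, abs_of_nonneg (by linarith [(hx i).2])]
  have hVc : ∀ i ∈ Vᶜ, |x i - indicatorVec V i| = x i := fun i hi => by
    rw [indicatorVec, if_neg (mem_compl.1 hi), sub_zero, abs_of_nonneg (hx i).1]
  rw [vertexDist, ← sum_add_sum_compl V, sum_congr rfl hV, sum_congr rfl hVc, sum_sub_distrib,
    parityCut_apply]
  simp only [sum_const, nsmul_eq_mul, mul_one]
  ring

theorem mem_feldmanPolytope_iff {x : ι → ℝ} :
    x ∈ feldmanPolytope ι ↔
      (∀ i, 0 ≤ x i ∧ x i ≤ 1) ∧ ∀ V : Finset ι, Odd #V → 1 ≤ vertexDist x V := by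
  refine and_congr_right fun hx => forall₂_congr fun V _ => ?_
  rw [vertexDist_eq_card_sub_parityCut hx, parityCut_apply]
  constructor <;> intro <;> linarith

theorem indicatorVec_mem_feldmanPolytope {S : Finset ι} (hS : Even #S) :
    indicatorVec S ∈ feldmanPolytope ι := by
  refine mem_feldmanPolytope_iff.2 ⟨fun i => ?_, fun V hV => ?_⟩
  · unfold indicatorVec; split_ifs <;> norm_num
  · have hodd : Odd #(S ∆ V) := by
      rw [← Nat.not_even_iff_odd, even_card_symmDiff_iff]
      simp [hS, Nat.not_even_iff_odd.2 hV]
    rw [vertexDist_indicatorVec]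
    exact_mod_cast hodd.pos

theorem mem_image_indicatorVec_of_forall_eq_zero_or_one {x : ι → ℝ}
    (hx : x ∈ feldmanPolytope ι) (hint : ∀ i, x i = 0 ∨ x i = 1) :
    x ∈ indicatorVec '' {S | Even #S} := by
  set S := univ.filter (x · = 1)
  have hxS : indicatorVec S = x := by
    funext i
    rcases hint i with h | h <;> simp [S, indicatorVec, h]
  refine ⟨S, ?_, hxS⟩
  by_contra hodd
  have hdist := (mem_feldmanPolytope_iff.1 hx).2 S (Nat.not_even_iff_odd.1 hodd)
  rw [← hxS, vertexDist_indicatorVec, symmDiff_self] at hdist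
  norm_num at hdist

theorem exists_ne_mem_Ioo_of_vertexDist_eq_one {x : ι → ℝ} (hx : ∀ i, 0 ≤ x i ∧ x i ≤ 1)
    {V : Finset ι} (hV : vertexDist x V = 1) {i : ι} (hi : x i ∈ Set.Ioo 0 1) :
    ∃ j ≠ i, x j ∈ Set.Ioo 0 1 := by
  by_contra! hint
  set f := fun k => |x k - indicatorVec V k|
  have hfi := abs_sub_indicatorVec_mem_Ioo hi V
  -- the slack `1` of a tight constraint leaves less than `1` for every other coordinate
  have hzero : ∀ k ≠ i, f k = 0 := by
    intro k hk
    have hpair : f i + f k ≤ 1 :=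
      hV ▸ add_le_sum (fun _ _ => abs_nonneg _) (mem_univ i) (mem_univ k) hk.symm
    have hk01 : x k = 0 ∨ x k = 1 := by
      by_cases h0 : x k = 0
      · exact .inl h0
      · exact .inr (by_contra fun h1 => hint k hk
          ⟨lt_of_le_of_ne (hx k).1 (Ne.symm h0), lt_of_le_of_ne (hx k).2 h1⟩)
    have hfk : f k = 0 ∨ f k = 1 := by
      rcases hk01 with h | h <;> by_cases hkV : k ∈ V <;> simp [f, indicatorVec, h, hkV]
    exact hfk.resolve_right fun h => by linarith [hfi.1]
  have hsingle : vertexDist x V = f i := sum_eq_single i (fun k _ hk => hzero k hk) (by simp)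
  linarith [hfi.2]

theorem mem_symmDiff_of_vertexDist_add_le_two {x : ι → ℝ} {V W : Finset ι} (hV : Odd #V)
    (hW : Odd #W) (hVW : V ≠ W) (hsum : vertexDist x V + vertexDist x W ≤ 2) {i : ι}
    (hi : x i ∈ Set.Ioo 0 1) : i ∈ V ∆ W := by
  by_contra hiVW
  have hcard : 2 ≤ #(V ∆ W) := by
    have heven : Even #(V ∆ W) := by
      rw [even_card_symmDiff_iff]
      simp [Nat.not_even_iff_odd.2 hV, Nat.not_even_iff_odd.2 hW]
    have hpos : 0 < #(V ∆ W) := card_pos.2 (symmDiff_nonempty.2 hVW)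
    obtain ⟨k, hk⟩ := heven
    omega
  have hle : ∀ k ∈ univ, |indicatorVec V k - indicatorVec W k| ≤
      |x k - indicatorVec V k| + |x k - indicatorVec W k| := fun k _ => by
    rw [abs_sub_comm (x k)]
    exact abs_sub_le _ _ _
  have hlt : |indicatorVec V i - indicatorVec W i| <
      |x i - indicatorVec V i| + |x i - indicatorVec W i| := by
    have hVWi : indicatorVec V i = indicatorVec W i := by
      rw [mem_symmDiff] at hiVW
      by_cases h : i ∈ V <;> simp [indicatorVec, h] <;> tauto
    have hpos := (abs_sub_indicatorVec_mem_Ioo hi W).1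
    rw [hVWi, sub_self, abs_zero]
    linarith
  have hstrict : (#(V ∆ W) : ℝ) < vertexDist x V + vertexDist x W := by
    rw [← vertexDist_indicatorVec, vertexDist, vertexDist, vertexDist, ← sum_add_distrib]
    exact sum_lt_sum hle ⟨i, mem_univ i, hlt⟩
  have : (2 : ℝ) ≤ #(V ∆ W) := by exact_mod_cast hcard
  linarith

theorem parityCut_single (V : Finset ι) (i : ι) :
    parityCut V (Pi.single i 1) = if i ∈ V then 1 else -1 := by
  by_cases h : i ∈ V <;> simp [sum_pi_single', h]

theorem parityCut_single_of_mem_symmDiff {V W : Finset ι} {i : ι} (h : i ∈ V ∆ W) :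
    parityCut W (Pi.single i 1) = -parityCut V (Pi.single i 1) := by
  rcases mem_symmDiff.1 h with ⟨h1, h2⟩ | ⟨h1, h2⟩ <;>
    simp only [parityCut_single, h1, h2, if_true, if_false, neg_neg]

theorem exists_direction_preserving_tight_of_mem_Ioo {x : ι → ℝ} (hx : x ∈ feldmanPolytope ι)
    {i : ι} (hi : x i ∈ Set.Ioo 0 1) :
    ∃ v : ι → ℝ, v ≠ 0 ∧ (∀ k, v k ≠ 0 → x k ∈ Set.Ioo 0 1) ∧
      ∀ V : Finset ι, Odd #V → vertexDist x V = 1 → parityCut V v = 0 := by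
  by_cases htight : ∃ V₀ : Finset ι, Odd #V₀ ∧ vertexDist x V₀ = 1
  · obtain ⟨V₀, hV₀, hV₀tight⟩ := htight
    obtain ⟨j, hji, hj⟩ := exists_ne_mem_Ioo_of_vertexDist_eq_one hx.1 hV₀tight hi
    set σ : ι → ℝ := fun k => parityCut V₀ (Pi.single k 1)
    refine ⟨σ j • Pi.single i 1 - σ i • Pi.single j 1, fun hv => ?_, fun k hk => ?_,
      fun V hV hVtight => ?_⟩
    · have hvi := congrFun hv i
      simp only [Pi.sub_apply, Pi.smul_apply, Pi.single_eq_same, Pi.single_eq_of_ne hji.symm,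
        smul_eq_mul, mul_one, mul_zero, sub_zero, Pi.zero_apply] at hvi
      simp only [σ, parityCut_single] at hvi
      split_ifs at hvi <;> norm_num at hvi
    · by_cases hki : k = i
      · exact hki ▸ hi
      by_cases hkj : k = j
      · exact hkj ▸ hj
      simp [Pi.single_eq_of_ne hki, Pi.single_eq_of_ne hkj] at hk
    · simp only [map_sub, map_smul, smul_eq_mul]
      by_cases hVV₀ : V = V₀
      · subst hVV₀; ring
      -- two distinct tight odd sets both separate `i` and `j`, so both signs flip
      have hsum : vertexDist x V₀ + vertexDist x V ≤ 2 := by linarith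
      rw [parityCut_single_of_mem_symmDiff
          (mem_symmDiff_of_vertexDist_add_le_two hV₀ hV (Ne.symm hVV₀) hsum hi),
        parityCut_single_of_mem_symmDiff
          (mem_symmDiff_of_vertexDist_add_le_two hV₀ hV (Ne.symm hVV₀) hsum hj)]
      ring
  · refine ⟨Pi.single i 1, fun hv => by simpa using congrFun hv i, fun k hk => ?_,
      fun V hV hVtight => (htight ⟨V, hV, hVtight⟩).elim⟩
    by_cases hki : k = i
    · exact hki ▸ hi
    simp [Pi.single_eq_of_ne hki] at hk

theorem eventually_add_smul_mem_feldmanPolytope {x v : ι → ℝ} (hx : x ∈ feldmanPolytope ι)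
    (hsupp : ∀ k, v k ≠ 0 → x k ∈ Set.Ioo 0 1)
    (htight : ∀ V : Finset ι, Odd #V → vertexDist x V = 1 → parityCut V v = 0) :
    ∀ᶠ t in 𝓝 (0 : ℝ), x + t • v ∈ feldmanPolytope ι := by
  obtain ⟨hbox, hcut⟩ := hx
  have hcoord : ∀ k, ∀ᶠ t in 𝓝 (0 : ℝ), 0 ≤ x k + t * v k ∧ x k + t * v k ≤ 1 := by
    intro k
    have hlower := eventually_add_mul_le (a := -x k) (b := -v k) (c := 0) (by linarith [hbox k])
      fun h => by_contra fun hv => by linarith [(hsupp k (by simpa using hv)).1]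
    have hupper := eventually_add_mul_le (a := x k) (b := v k) (c := 1) (hbox k).2
      fun h => by_contra fun hv => by linarith [(hsupp k hv).2]
    filter_upwards [hlower, hupper] with t hl hu
    exact ⟨by linarith, hu⟩
  have hodd : ∀ V : Finset ι, ∀ᶠ t in 𝓝 (0 : ℝ),
      Odd #V → parityCut V x + t * parityCut V v ≤ #V - 1 := by
    intro V
    by_cases hV : Odd #V
    · have hle : parityCut V x ≤ #V - 1 := by simpa using hcut V hV
      filter_upwards [eventually_add_mul_le hle fun h => htight V hV (by
        rw [vertexDist_eq_card_sub_parityCut hbox, h]; ring)] with t ht using fun _ => ht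
    · exact Eventually.of_forall fun _ h => (hV h).elim
  filter_upwards [eventually_all.2 hcoord, eventually_all.2 hodd] with t hc ho
  refine ⟨fun k => by simpa using hc k, fun V hV => ?_⟩
  have hcutV := ho V hV
  rwa [← smul_eq_mul, ← map_smul, ← map_add, parityCut_apply] at hcutV

theorem eq_zero_or_one_of_mem_extremePoints {x : ι → ℝ}
    (hx : x ∈ (feldmanPolytope ι).extremePoints ℝ) (i : ι) : x i = 0 ∨ x i = 1 := by
  by_contra! h
  have hbox := hx.1.1 i
  obtain ⟨v, hv0, hsupp, htight⟩ := exists_direction_preserving_tight_of_mem_Ioo hx.1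
    ⟨lt_of_le_of_ne hbox.1 (Ne.symm h.1), lt_of_le_of_ne hbox.2 h.2⟩
  exact hv0 (eq_zero_of_mem_extremePoints_of_eventually_add_smul_mem hx
    (eventually_add_smul_mem_feldmanPolytope hx.1 hsupp htight))

theorem feldmanPolytope_eq_inter :
    feldmanPolytope ι = Set.Icc 0 1 ∩ ⋂ V ∈ {V : Finset ι | Odd #V},
      {x | parityCut V x ≤ #V - 1} := by
  ext x
  simp [feldmanPolytope, Set.mem_Icc, Pi.le_def, forall_and]

theorem convex_feldmanPolytope : Convex ℝ (feldmanPolytope ι) := by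
  rw [feldmanPolytope_eq_inter]
  exact (convex_Icc _ _).inter
    (convex_iInter₂ fun V _ => convex_halfSpace_le (parityCut V).isLinear _)

theorem isCompact_feldmanPolytope : IsCompact (feldmanPolytope ι) := by
  rw [feldmanPolytope_eq_inter]
  exact isCompact_Icc.inter_right (isClosed_biInter fun V _ =>
    isClosed_le (parityCut V).continuous_of_finiteDimensional continuous_const)

variable (ι) in
theorem feldmanPolytope_eq_convexHull :
    feldmanPolytope ι = convexHull ℝ (indicatorVec '' {S | Even #S}) := by
  refine (convexHull_min ?_ convex_feldmanPolytope).antisymm' ?_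
  · rintro _ ⟨S, hS, rfl⟩
    exact indicatorVec_mem_feldmanPolytope hS
  calc feldmanPolytope ι
      = closure (convexHull ℝ ((feldmanPolytope ι).extremePoints ℝ)) :=
        (closure_convexHull_extremePoints isCompact_feldmanPolytope convex_feldmanPolytope).symm
    _ ⊆ closure (convexHull ℝ (indicatorVec '' {S | Even #S})) :=
        closure_mono <| convexHull_mono fun x hx =>
          mem_image_indicatorVec_of_forall_eq_zero_or_one hx.1
            (eq_zero_or_one_of_mem_extremePoints hx)
    _ = convexHull ℝ (indicatorVec '' {S | Even #S}) :=
        (((Set.toFinite _).image indicatorVec).isClosed_convexHull ℝ).closure_eq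

theorem parityPolytope_eq_convexHull_indicatorVec (d : ℕ) :
    parityPolytope d = convexHull ℝ (indicatorVec '' {S : Finset (Fin d) | Even #S}) := by
  unfold parityPolytope
  congr 1
  ext x
  constructor
  · rintro ⟨c, hc, rfl⟩
    exact ⟨univ.filter (c · = true), hc, by funext i; simp [indicatorVec]⟩
  · rintro ⟨S, hS, rfl⟩
    exact ⟨fun i => decide (i ∈ S), by simpa using hS, by funext i; simp [indicatorVec]⟩

end ParityCheck

theorem feldman_constraints_eq_parityPolytope_general (d : ℕ) :
    {x : Fin d → ℝ | (∀ i, 0 ≤ x i ∧ x i ≤ 1) ∧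
        ∀ V : Finset (Fin d), Odd V.card →
          (∑ i ∈ V, x i) - (∑ i ∈ Vᶜ, x i) ≤ (V.card : ℝ) - 1}
      = parityPolytope d :=
  (ParityCheck.feldmanPolytope_eq_convexHull (Fin d)).trans
    (ParityCheck.parityPolytope_eq_convexHull_indicatorVec d).symm

/-- For `d ≥ 1`, the set of `x ∈ [0,1]^d` satisfying Feldman's
constraints `∑_{i∈V} x_i − ∑_{i∉V} x_i ≤ |V| − 1` for every odd-size
`V ⊆ {1,…,d}` is exactly the parity polytope of degree `d`. -/
theorem feldman_constraints_eq_parityPolytope (d : ℕ) (hd : 1 ≤ d) :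
    {x : Fin d → ℝ | (∀ i, 0 ≤ x i ∧ x i ≤ 1) ∧
        ∀ V : Finset (Fin d), Odd V.card →
          (∑ i ∈ V, x i) - (∑ i ∈ Vᶜ, x i) ≤ (V.card : ℝ) - 1}
      = parityPolytope d :=
  feldman_constraints_eq_parityPolytope_general d
end

section
/- For every integer d ≥ 2 and every index k ∈ {1,…,d}, the image of the parity polytope of degree d under the projection that deletes coordinate k equals the full cube [0,1]^{d−1}; that is, for every y ∈ [0,1]^{d−1} there exists t ∈ [0,1] such that the vector obtained from y by inserting t at position k lies in the convex hull of the even-weight vectors of {0,1}^d. -/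
/-!
Deleting a coordinate is linear, so it maps the parity polytope onto the convex hull of the
images of its vertices. Every binary vector of length `d - 1` is such an image: insert at the
deleted position the bit that makes the weight even. The convex hull of `{0,1}^(d-1)` is the cube.
-/

open Finset

lemma card_filter_insertNth_eq_true {n : ℕ} (k : Fin (n + 1)) (b : Bool) (c : Fin n → Bool) :
    #{j | (k.insertNth b c : Fin (n + 1) → Bool) j = true} = #{j | c j = true} + b.toNat := by
  simp only [card_filter, Fin.sum_univ_succAbove _ k, Fin.insertNth_apply_same,
    Fin.insertNth_apply_succAbove]
  cases b <;> simp [add_comm]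

lemma exists_even_card_filter_insertNth {n : ℕ} (k : Fin (n + 1)) (c : Fin n → Bool) :
    ∃ b : Bool, Even #{j | (k.insertNth b c : Fin (n + 1) → Bool) j = true} := by
  simp only [card_filter_insertNth_eq_true]
  rcases Nat.even_or_odd #{j | c j = true} with h | h
  · exact ⟨false, by simpa using h⟩
  · exact ⟨true, by simpa using h.add_one⟩

def parityVertices (d : ℕ) : Set (Fin d → ℝ) :=
  {x | ∃ c : Fin d → Bool, Even #{i | c i = true} ∧ x = fun i => if c i then 1 else 0}

lemma parityVertices_subset_binary (d : ℕ) :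
    parityVertices d ⊆ {x | ∀ i, x i ∈ ({0, 1} : Set ℝ)} := by
  rintro _ ⟨c, -, rfl⟩ i
  cases c i <;> simp

lemma image_parityVertices_delete_coord {n : ℕ} (k : Fin (n + 1)) :
    (· ∘ k.succAbove) '' parityVertices (n + 1) = {y | ∀ i, y i ∈ ({0, 1} : Set ℝ)} := by
  refine Set.Subset.antisymm ?_ fun y hy => ?_
  · rintro _ ⟨x, hx, rfl⟩ i
    exact parityVertices_subset_binary _ hx _
  · obtain ⟨b, hb⟩ := exists_even_card_filter_insertNth k fun i => decide (y i = 1)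
    refine ⟨_, ⟨_, hb, rfl⟩, funext fun i => ?_⟩
    rcases hy i with h | h <;> simp_all

lemma convexHull_binary_eq_cube (ι : Type*) [Finite ι] :
    convexHull ℝ {x : ι → ℝ | ∀ i, x i ∈ ({0, 1} : Set ℝ)}
      = {x | ∀ i, x i ∈ Set.Icc (0 : ℝ) 1} := by
  have := convexHull_pi (𝕜 := ℝ) Set.univ fun _ : ι => ({0, 1} : Set ℝ)
  simpa only [Set.pi, Set.mem_univ, true_imp_iff, convexHull_pair,
    segment_eq_Icc zero_le_one] using this

lemma parityPolytope_subset_cube (d : ℕ) :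
    parityPolytope d ⊆ {x | ∀ i, x i ∈ Set.Icc (0 : ℝ) 1} :=
  convexHull_binary_eq_cube (Fin d) ▸ convexHull_mono (parityVertices_subset_binary d)

theorem parityPolytope_delete_coord_eq_cube_general (n : ℕ) (k : Fin (n + 1)) :
    ((fun x : Fin (n + 1) → ℝ => x ∘ k.succAbove) '' parityPolytope (n + 1)
        = {y : Fin n → ℝ | ∀ i, y i ∈ Set.Icc (0 : ℝ) 1}) ∧
      ∀ y : Fin n → ℝ, (∀ i, y i ∈ Set.Icc (0 : ℝ) 1) →
        ∃ t ∈ Set.Icc (0 : ℝ) 1, k.insertNth t y ∈ parityPolytope (n + 1) := by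
  have himage : (fun x : Fin (n + 1) → ℝ => x ∘ k.succAbove) '' parityPolytope (n + 1)
      = {y : Fin n → ℝ | ∀ i, y i ∈ Set.Icc (0 : ℝ) 1} := calc
    _ = LinearMap.funLeft ℝ ℝ k.succAbove '' convexHull ℝ (parityVertices (n + 1)) := rfl
    _ = convexHull ℝ ((· ∘ k.succAbove) '' parityVertices (n + 1)) :=
      LinearMap.image_convexHull _ _
    _ = _ := by rw [image_parityVertices_delete_coord, convexHull_binary_eq_cube]
  refine ⟨himage, fun y hy => ?_⟩
  obtain ⟨x, hx, rfl⟩ : y ∈ _ '' parityPolytope (n + 1) := by rwa [himage]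
  refine ⟨x k, parityPolytope_subset_cube _ hx k, ?_⟩
  change k.insertNth (x k) (k.removeNth x) ∈ _
  rwa [Fin.insertNth_self_removeNth]

/-- For degree `d = n + 1 ≥ 2` and any coordinate `k`, the image
of the parity polytope under the projection deleting coordinate `k` is the full
cube `[0,1]^{d−1}`: for every `y` in the cube there is `t ∈ [0,1]` with the
vector obtained by inserting `t` at position `k` lying in the parity polytope. -/
theorem parityPolytope_delete_coord_eq_cube (n : ℕ) (hn : 1 ≤ n) (k : Fin (n + 1)) :
    ((fun x : Fin (n + 1) → ℝ => x ∘ k.succAbove) '' parityPolytope (n + 1)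
        = {y : Fin n → ℝ | ∀ i, y i ∈ Set.Icc (0 : ℝ) 1}) ∧
      ∀ y : Fin n → ℝ, (∀ i, y i ∈ Set.Icc (0 : ℝ) 1) →
        ∃ t ∈ Set.Icc (0 : ℝ) 1, k.insertNth t y ∈ parityPolytope (n + 1) :=
  parityPolytope_delete_coord_eq_cube_general n k
end

section
/- Let m ≥ 1 and N = 2^m. Let B_N be the N × N bit-reversal permutation matrix over the field 𝔽₂ = ZMod 2, i.e., the permutation matrix of the permutation on {0,1,…,N−1} that maps an index to the index whose m-bit binary representation is reversed. Let G₂^{⊗m} be the m-fold Kronecker power of G₂ = [[1,0],[1,1]] over 𝔽₂. Then B_N · G₂^{⊗m} = G₂^{⊗m} · B_N, i.e., the bit-reversal permutation matrix commutes with the polar transform kernel power. -/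
/-!
Index rows and columns by the binary expansions of `i` and `j`. Since `G₂ a b = 1` iff `b ≤ a`,
the Kronecker power has `G₂^{⊗m} i j = 1` exactly when every bit of `j` is a bit of `i`. Reversing
the bits of `i` and of `j` simultaneously preserves this relation, and bit reversal is an involution,
so `(B G₂^{⊗m}) i j = G₂^{⊗m} (rev i) j = G₂^{⊗m} i (rev j) = (G₂^{⊗m} B) i j`.
-/

open Matrix

/-- Arıkan's polarization kernel `G₂ = [[1,0],[1,1]]` over `𝔽₂`. -/
def G2 : Matrix (Fin 2) (Fin 2) (ZMod 2) := !![1, 0; 1, 1]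

/-- The `m`-fold Kronecker power `G₂^{⊗m}`, a `2^m × 2^m` matrix over `𝔽₂`. -/
def kronPowG2 : (m : ℕ) → Matrix (Fin (2 ^ m)) (Fin (2 ^ m)) (ZMod 2)
  | 0 => 1
  | m + 1 =>
    Matrix.reindex
      (finProdFinEquiv.trans (finCongr (by rw [pow_succ, mul_comm])))
      (finProdFinEquiv.trans (finCongr (by rw [pow_succ, mul_comm])))
      (Matrix.kronecker G2 (kronPowG2 m))

/-- Reversal of the `m`-bit binary representation of a natural number:
bit `k` of `n` (for `k < m`) becomes bit `m − 1 − k` of the result. -/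
def bitRevNat (m n : ℕ) : ℕ :=
  ∑ k ∈ Finset.range m, if n.testBit k then 2 ^ (m - 1 - k) else 0

/-- The `2^m × 2^m` bit-reversal permutation matrix `B_N` over `𝔽₂`: the
permutation matrix of the permutation of `{0,…,2^m − 1}` reversing the `m`-bit
binary representation. -/
def bitRevMatrix (m : ℕ) : Matrix (Fin (2 ^ m)) (Fin (2 ^ m)) (ZMod 2) :=
  Matrix.of fun i j => if (j : ℕ) = bitRevNat m (i : ℕ) then 1 else 0

namespace Nat

theorem testBit_sum_two_pow (s : Finset ℕ) (k : ℕ) :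
    (∑ i ∈ s, 2 ^ i).testBit k = decide (k ∈ s) := by
  rw [Bool.eq_iff_iff, decide_eq_true_iff, ← mem_bitIndices, ← List.mem_toFinset,
    Finset.toFinset_bitIndices_sum_two_pow]

theorem lt_of_testBit_of_lt_two_pow {x m k : ℕ} (hx : x < 2 ^ m) (h : x.testBit k) : k < m :=
  (Nat.pow_lt_pow_iff_right one_lt_two).1 ((ge_two_pow_of_testBit h).trans_lt hx)

def IsSubmask (y x : ℕ) : Prop :=
  ∀ k, y.testBit k → x.testBit k

theorem isSubmask_two_pow_mul_add_iff {m a a' b b' : ℕ} (hb : b < 2 ^ m) (hb' : b' < 2 ^ m) :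
    IsSubmask (2 ^ m * a' + b') (2 ^ m * a + b) ↔ IsSubmask a' a ∧ IsSubmask b' b := by
  simp only [IsSubmask, testBit_two_pow_mul_add _ hb, testBit_two_pow_mul_add _ hb']
  constructor
  · intro h
    refine ⟨fun k hk => ?_, fun k hk => ?_⟩
    · have := h (k + m)
      rw [if_neg (by omega), if_neg (by omega), Nat.add_sub_cancel] at this
      exact this hk
    · have hkm := lt_of_testBit_of_lt_two_pow hb' hk
      simpa [hkm] using h k (by simpa [hkm] using hk)
  · rintro ⟨ha, hb⟩ k
    split_ifs
    exacts [hb k, ha (k - m)]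

end Nat

open Nat

theorem bitRevNat_eq_sum (m n : ℕ) :
    bitRevNat m n = ∑ i ∈ (Finset.range m).filter (fun i => n.testBit (m - 1 - i)), 2 ^ i := by
  rw [Finset.sum_filter, bitRevNat, ← Finset.sum_range_reflect]
  refine Finset.sum_congr rfl fun k hk => ?_
  rw [show m - 1 - (m - 1 - k) = k by have := Finset.mem_range.1 hk; omega]

theorem testBit_bitRevNat (m n k : ℕ) :
    (bitRevNat m n).testBit k = (decide (k < m) && n.testBit (m - 1 - k)) := by
  simp [bitRevNat_eq_sum, testBit_sum_two_pow]

theorem bitRevNat_lt (m n : ℕ) : bitRevNat m n < 2 ^ m :=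
  lt_pow_two_of_testBit _ fun k hk => by simp [testBit_bitRevNat, not_lt.2 hk]

theorem bitRevNat_bitRevNat {m n : ℕ} (hn : n < 2 ^ m) : bitRevNat m (bitRevNat m n) = n := by
  refine eq_of_testBit_eq fun k => ?_
  by_cases hk : k < m
  · simp [testBit_bitRevNat, hk, show m - 1 - k < m by omega,
      show m - 1 - (m - 1 - k) = k by omega]
  · simpa [testBit_bitRevNat, hk] using fun h => hk (lt_of_testBit_of_lt_two_pow hn h)

theorem isSubmask_bitRevNat_iff {m x y : ℕ} (hy : y < 2 ^ m) :
    IsSubmask y (bitRevNat m x) ↔ IsSubmask (bitRevNat m y) x := by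
  simp only [IsSubmask, testBit_bitRevNat, Bool.and_eq_true, decide_eq_true_eq]
  constructor
  · rintro h k ⟨hk, hyk⟩
    simpa [show m - 1 - (m - 1 - k) = k by omega] using (h _ hyk).2
  · intro h k hyk
    have hk := lt_of_testBit_of_lt_two_pow hy hyk
    exact ⟨hk, h _ ⟨by omega, by rwa [show m - 1 - (m - 1 - k) = k by omega]⟩⟩

def bitRev (m : ℕ) : Equiv.Perm (Fin (2 ^ m)) where
  toFun i := ⟨bitRevNat m i, bitRevNat_lt m i⟩
  invFun i := ⟨bitRevNat m i, bitRevNat_lt m i⟩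
  left_inv i := Fin.ext (bitRevNat_bitRevNat i.isLt)
  right_inv i := Fin.ext (bitRevNat_bitRevNat i.isLt)

@[simp]
theorem val_bitRev (m : ℕ) (i : Fin (2 ^ m)) : (bitRev m i : ℕ) = bitRevNat m i := rfl

theorem bitRev_symm (m : ℕ) : (bitRev m).symm = bitRev m := rfl

theorem bitRevMatrix_eq_toMatrix (m : ℕ) : bitRevMatrix m = (bitRev m).toPEquiv.toMatrix := by
  ext i j
  simp [bitRevMatrix, PEquiv.toMatrix_apply, Fin.ext_iff, eq_comm]

/-- The index equivalence used in the recursive definition of `kronPowG2`. -/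
def finTwoProdEquiv (m : ℕ) : Fin 2 × Fin (2 ^ m) ≃ Fin (2 ^ (m + 1)) :=
  finProdFinEquiv.trans (finCongr (by rw [pow_succ, mul_comm]))

theorem val_finTwoProdEquiv {m : ℕ} (p : Fin 2 × Fin (2 ^ m)) :
    (finTwoProdEquiv m p : ℕ) = 2 ^ m * p.1 + p.2 := by
  simp [finTwoProdEquiv, add_comm]

theorem kronPowG2_succ_apply (m : ℕ) (p q : Fin 2 × Fin (2 ^ m)) :
    kronPowG2 (m + 1) (finTwoProdEquiv m p) (finTwoProdEquiv m q) =
      G2 p.1 q.1 * kronPowG2 m p.2 q.2 := by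
  simp [kronPowG2, finTwoProdEquiv, kroneckerMap_apply]

open Classical in
theorem G2_apply (a b : Fin 2) : G2 a b = if IsSubmask b a then 1 else 0 := by
  fin_cases a <;> fin_cases b <;> simp [G2, IsSubmask, testBit_one_eq_true_iff_self_eq_zero]

open Classical in
theorem kronPowG2_apply (m : ℕ) (i j : Fin (2 ^ m)) :
    kronPowG2 m i j = if IsSubmask j i then 1 else 0 := by
  induction m with
  | zero =>
    obtain rfl : i = j := Subsingleton.elim (α := Fin 1) i j
    simp [kronPowG2, IsSubmask]
  | succ m ih =>
    obtain ⟨p, rfl⟩ := (finTwoProdEquiv m).surjective i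
    obtain ⟨q, rfl⟩ := (finTwoProdEquiv m).surjective j
    rw [kronPowG2_succ_apply, G2_apply, ih, ite_zero_mul_ite_zero, one_mul]
    simp only [val_finTwoProdEquiv, isSubmask_two_pow_mul_add_iff p.2.isLt q.2.isLt]

theorem kronPowG2_bitRev_apply (m : ℕ) (i j : Fin (2 ^ m)) :
    kronPowG2 m (bitRev m i) j = kronPowG2 m i (bitRev m j) := by
  rw [kronPowG2_apply, kronPowG2_apply, val_bitRev, val_bitRev, isSubmask_bitRevNat_iff j.isLt]

theorem bitRevMatrix_commute_kronPowG2_general (m : ℕ) :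
    bitRevMatrix m * kronPowG2 m = kronPowG2 m * bitRevMatrix m := by
  rw [bitRevMatrix_eq_toMatrix, PEquiv.toMatrix_toPEquiv_mul, PEquiv.mul_toMatrix_toPEquiv,
    bitRev_symm]
  ext i j
  exact kronPowG2_bitRev_apply m i j

/-- For `m ≥ 1` and `N = 2^m`, the bit-reversal permutation
matrix commutes with the polar transform kernel power:
`B_N · G₂^{⊗m} = G₂^{⊗m} · B_N`. -/
theorem bitRevMatrix_commute_kronPowG2 (m : ℕ) (hm : 1 ≤ m) :
    bitRevMatrix m * kronPowG2 m = kronPowG2 m * bitRevMatrix m :=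
  bitRevMatrix_commute_kronPowG2_general m
end

section
/- Let γ ∈ ℝ^N and let B = {x ∈ ℝ^N : x_i ≥ 0 whenever γ_i ≥ 0, and x_i ≤ 1 whenever γ_i < 0} be the feasible region of the initial LP of the adaptive LP decoder. Define the hard-decision vector x* by x*_i = 0 if γ_i ≥ 0 and x*_i = 1 if γ_i < 0. Then x* ∈ B and γᵀx* ≤ γᵀx for every x ∈ B, i.e., x* is an optimal solution of the initial LP (minimize γᵀx subject to x ∈ B); moreover, if γ_i ≠ 0 for every i, then x* is the unique minimizer. Thus the solution of the initial LP coincides with the output of hard-decision decoding of the received LLR values. -/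
/-!
Minimizing `γᵀx` over the one-sided box splits into `N` independent one-variable problems:
`γ_i x_i` is minimized at `x_i = 0` when `γ_i ≥ 0` and at `x_i = 1` when `γ_i < 0`, which is
exactly the hard decision. When `γ_i ≠ 0` each coordinate problem has a unique minimizer, and a
sum of termwise inequalities is an equality only if every term is.
-/

namespace AdaptiveLP

variable {ι R : Type*} [Ring R] [LinearOrder R] [IsStrictOrderedRing R]

def initialBox (γ : ι → R) : Set (ι → R) :=
  {x | ∀ i, (0 ≤ γ i → 0 ≤ x i) ∧ (γ i < 0 → x i ≤ 1)}

def hardDecision (γ : ι → R) (i : ι) : R :=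
  if 0 ≤ γ i then 0 else 1

theorem hardDecision_mem_initialBox (γ : ι → R) : hardDecision γ ∈ initialBox γ := by
  intro i
  by_cases h : 0 ≤ γ i <;> simp [hardDecision, h]

theorem mul_hardDecision_le {γ x : ι → R} (hx : x ∈ initialBox γ) (i : ι) :
    γ i * hardDecision γ i ≤ γ i * x i := by
  obtain ⟨hpos, hneg⟩ := hx i
  rcases le_or_gt 0 (γ i) with h | h
  · simpa [hardDecision, h] using mul_nonneg h (hpos h)
  · simpa [hardDecision, h.not_ge] using mul_le_mul_of_nonpos_left (hneg h) h.le

variable [Fintype ι]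

theorem sum_mul_hardDecision_le {γ x : ι → R} (hx : x ∈ initialBox γ) :
    ∑ i, γ i * hardDecision γ i ≤ ∑ i, γ i * x i :=
  Finset.sum_le_sum fun i _ ↦ mul_hardDecision_le hx i

theorem eq_hardDecision_of_sum_mul_le {γ x : ι → R} (hγ : ∀ i, γ i ≠ 0)
    (hx : x ∈ initialBox γ) (hle : ∑ i, γ i * x i ≤ ∑ i, γ i * hardDecision γ i) :
    x = hardDecision γ := by
  have hsum := le_antisymm (sum_mul_hardDecision_le hx) hle
  have hterm := (Finset.sum_eq_sum_iff_of_le fun i _ ↦ mul_hardDecision_le hx i).mp hsum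
  funext i
  exact mul_left_cancel₀ (hγ i) (hterm i (Finset.mem_univ i)).symm

end AdaptiveLP

open AdaptiveLP in
/-- The hard-decision vector `x*` (with `x*_i = 0` if `γ_i ≥ 0`
and `x*_i = 1` if `γ_i < 0`) is an optimal solution of the initial LP of the
adaptive LP decoder — minimize `γᵀx` subject to `x_i ≥ 0` when `γ_i ≥ 0` and
`x_i ≤ 1` when `γ_i < 0` — and it is the unique minimizer whenever `γ_i ≠ 0`
for all `i`. -/
theorem initial_lp_solution_is_hard_decision (N : ℕ) (γ : Fin N → ℝ)
    (B : Set (Fin N → ℝ))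
    (hB : B = {x | ∀ i, (0 ≤ γ i → 0 ≤ x i) ∧ (γ i < 0 → x i ≤ 1)})
    (xstar : Fin N → ℝ) (hxstar : ∀ i, xstar i = if 0 ≤ γ i then 0 else 1) :
    xstar ∈ B ∧
      (∀ x ∈ B, (∑ i, γ i * xstar i) ≤ ∑ i, γ i * x i) ∧
      ((∀ i, γ i ≠ 0) →
        ∀ x ∈ B, (∑ i, γ i * x i) ≤ (∑ i, γ i * xstar i) → x = xstar) := by
  obtain rfl : B = initialBox γ := hB
  obtain rfl : xstar = hardDecision γ := funext hxstar
  exact ⟨hardDecision_mem_initialBox γ, fun _ ↦ sum_mul_hardDecision_le,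
    fun hγ _ hx hle ↦ eq_hardDecision_of_sum_mul_le hγ hx hle⟩
end
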